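/- Grelling's paradox, positive half: in minimal logic with a binary truth-of predicate, from the axioms P(x) → T(P,x), T(P,x) ∧ T(Q,x) → T(P ∧ Q, x), T(P ∧ ¬P, x) → T(⊥, x), and T(⊥, x) → T(⊥), if H is the predicate defined by H(P) ↔ T(¬P, P), then H(H) → T(⊥) is derivable. -/
import Mathlib


/-- Propositional formulas built from variables and ⊥ using ∧, ∨, →. -/
inductive Fm : Type
  | var : ℕ → Fm
  | bot : Fm
  | and : Fm → Fm → Fm
  | or : Fm → Fm → Fm
  | imp : Fm → Fm → Fm
deriving DecidableEq

/-- ¬A is defined as A → ⊥. -/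
def Fm.neg (A : Fm) : Fm := A.imp .bot

/-- Hilbert-style derivability in minimal propositional logic (intuitionistic
logic without ex falso quodlibet), extended by an extra set `Ax` of axioms. -/
inductive Deriv (Ax : Fm → Prop) : Fm → Prop
  | ax {A} : Ax A → Deriv Ax A
  | k (A B : Fm) : Deriv Ax (A.imp (B.imp A))
  | s (A B C : Fm) : Deriv Ax ((A.imp (B.imp C)).imp ((A.imp B).imp (A.imp C)))
  | andI (A B : Fm) : Deriv Ax (A.imp (B.imp (A.and B)))
  | andE1 (A B : Fm) : Deriv Ax ((A.and B).imp A)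
  | andE2 (A B : Fm) : Deriv Ax ((A.and B).imp B)
  | orI1 (A B : Fm) : Deriv Ax (A.imp (A.or B))
  | orI2 (A B : Fm) : Deriv Ax (B.imp (A.or B))
  | orE (A B C : Fm) : Deriv Ax ((A.imp C).imp ((B.imp C).imp ((A.or B).imp C)))
  | mp {A B : Fm} : Deriv Ax (A.imp B) → Deriv Ax A → Deriv Ax B


theorem DerivComp {Ax : Fm → Prop} {A B C : Fm}
    (hab : Deriv Ax (A.imp B)) (hbc : Deriv Ax (B.imp C)) :
    Deriv Ax (A.imp C) :=
  Deriv.mp (Deriv.mp (Deriv.s A B C) (Deriv.mp (Deriv.k (B.imp C) A) hbc)) hab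

theorem DerivPair {Ax : Fm → Prop} {A X Y : Fm}
    (hx : Deriv Ax (A.imp X)) (hy : Deriv Ax (A.imp Y)) :
    Deriv Ax (A.imp (X.and Y)) :=
  Deriv.mp (Deriv.mp (Deriv.s A Y (X.and Y)) (DerivComp hx (Deriv.andI X Y))) hy

/-- Grelling, positive half: with a type `Pred` of predicate
expressions, application `app`, truth-of `T2`, predicate negation/conjunction,
a `⊥` predicate, and the propositional constant T(⊥), from the listed axioms
and H(P) ↔ T(¬P, P) one derives H(H) → T(⊥). -/
theorem stmt8 (Pred : Type) (Ax : Fm → Prop)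
    (app : Pred → Pred → Fm) (T2 : Pred → Pred → Fm)
    (pneg : Pred → Pred) (pand : Pred → Pred → Pred) (pbot : Pred)
    (Tbot : Fm)
    (hneg : ∀ (P : Pred) (x : Pred), app (pneg P) x = (app P x).neg)
    (h1 : ∀ (P x : Pred), Deriv Ax ((app P x).imp (T2 P x)))
    (h2 : ∀ (P Q x : Pred),
      Deriv Ax (((T2 P x).and (T2 Q x)).imp (T2 (pand P Q) x)))
    (h3 : ∀ (P x : Pred), Deriv Ax ((T2 (pand P (pneg P)) x).imp (T2 pbot x)))
    (h4 : ∀ x : Pred, Deriv Ax ((T2 pbot x).imp Tbot))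
    (H : Pred)
    (hH1 : ∀ P : Pred, Deriv Ax ((app H P).imp (T2 (pneg P) P)))
    (hH2 : ∀ P : Pred, Deriv Ax ((T2 (pneg P) P).imp (app H P))) :
    Deriv Ax ((app H H).imp Tbot) := by
  exact DerivComp (DerivPair (h1 H H) (hH1 H))
    (DerivComp (h2 H (pneg H) H) (DerivComp (h3 H H) (h4 H)))
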